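/- arXiv:1905.03862 — 2 statements merged into one kernel-verified Lean document; each statement's English description precedes it below -/
import Mathlib

section
/- Let R>0, c2>0, γ>0, k≥1, β∈(-1,0], and let u(r) = (c2(1+γ)/k · (R/(β+1)·(R-r)^{β+1} - 1/(β+2)·(R-r)^{β+2}))^{1/(1+γ)}. Then u'(r)≤0 and u(r)>0 for all r∈[0,R), and u''(r) ≤ u'(r)/r for all r∈(0,R). -/
/-!
With `g r = R/(β+1) (R-r)^(β+1) - 1/(β+2) (R-r)^(β+2)`, `C = c2 (1+γ)/k` and `p = 1/(1+γ)`,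
we have `u = (C g)^p` and `g' r = -r (R-r)^β`, so `g > 0` is decreasing on `[0, R)` and
`u' r = -r w r` with `w r = C p (R-r)^β (C g r)^(p-1) > 0`. Since `β ≤ 0` and `p ≤ 1`, both factors
of `w` are nondecreasing, so `w' ≥ 0` and `u'' = -w - r w' ≤ -w = u'/r`.
-/

open Set Filter Topology

lemma HasDerivAt.nonneg_of_monotoneOn_of_mem_nhds {g : ℝ → ℝ} {g' x : ℝ} {s : Set ℝ}
    (hd : HasDerivAt g g' x) (hg : MonotoneOn g s) (hs : s ∈ 𝓝 x) : 0 ≤ g' := by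
  have hacc : AccPt x (𝓟 (s ∩ univ)) :=
    (PerfectSpace.univ_preperfect x (mem_univ x)).nhds_inter hs
  rw [inter_univ] at hacc
  exact hd.hasDerivWithinAt.nonneg_of_monotoneOn hacc hg

lemma deriv_deriv_le_deriv_div_of_eventuallyEq_neg_mul {f w : ℝ → ℝ} {r : ℝ} {s : Set ℝ}
    (hr : 0 < r) (hf : deriv f =ᶠ[𝓝 r] fun t => -(t * w t)) (hw : DifferentiableAt ℝ w r)
    (hmono : MonotoneOn w s) (hs : s ∈ 𝓝 r) :
    deriv (deriv f) r ≤ deriv f r / r := by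
  have hw' : 0 ≤ deriv w r := hw.hasDerivAt.nonneg_of_monotoneOn_of_mem_nhds hmono hs
  have hd : HasDerivAt (fun t => -(t * w t)) (-(1 * w r + r * deriv w r)) r :=
    ((hasDerivAt_id r).mul hw.hasDerivAt).neg
  rw [hf.deriv_eq, hd.deriv, hf.eq_of_nhds, le_div_iff₀ hr]
  nlinarith [mul_nonneg hr.le hw']

noncomputable section

def radialProfile (R β r : ℝ) : ℝ :=
  R / (β + 1) * (R - r) ^ (β + 1) - 1 / (β + 2) * (R - r) ^ (β + 2)

variable {R β r : ℝ}

lemma radialProfile_eq_mul (hr : r < R) :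
    radialProfile R β r = (R - r) ^ (β + 1) * (R / (β + 1) - (R - r) / (β + 2)) := by
  rw [radialProfile, show β + 2 = β + 1 + 1 by ring, Real.rpow_add_one (sub_pos.2 hr).ne' (β + 1)]
  ring

lemma radialProfile_pos (hβ : -1 < β) (hr₀ : 0 ≤ r) (hr : r < R) : 0 < radialProfile R β r := by
  rw [radialProfile_eq_mul hr]
  refine mul_pos (Real.rpow_pos_of_pos (sub_pos.2 hr) _) (sub_pos.2 ?_)
  calc (R - r) / (β + 2) ≤ R / (β + 2) := by gcongr <;> linarith
    _ < R / (β + 1) := div_lt_div_of_pos_left (by linarith) (by linarith) (by linarith)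

lemma hasDerivAt_radialProfile (hβ₁ : β + 1 ≠ 0) (hβ₂ : β + 2 ≠ 0) (hr : r < R) :
    HasDerivAt (radialProfile R β) (-(r * (R - r) ^ β)) r := by
  have hRr : R - r ≠ 0 := (sub_pos.2 hr).ne'
  have hsub : HasDerivAt (fun s : ℝ => R - s) (-1) r := (hasDerivAt_id r).const_sub R
  have hd := ((hsub.rpow_const (p := β + 1) (Or.inl hRr)).const_mul (R / (β + 1))).fun_sub
    ((hsub.rpow_const (p := β + 2) (Or.inl hRr)).const_mul (1 / (β + 2)))
  refine hd.congr_deriv ?_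
  rw [show β + 1 - 1 = β by ring, show β + 2 - 1 = β + 1 by ring, Real.rpow_add_one hRr]
  field_simp
  ring

lemma radialProfile_antitoneOn (hβ : -1 < β) : AntitoneOn (radialProfile R β) (Ico 0 R) := by
  have hd : ∀ r ∈ Ico 0 R, HasDerivAt (radialProfile R β) (-(r * (R - r) ^ β)) r :=
    fun r hr => hasDerivAt_radialProfile (by linarith) (by linarith) hr.2
  refine antitoneOn_of_deriv_nonpos (convex_Ico 0 R)
    (fun r hr => (hd r hr).continuousAt.continuousWithinAt)
    (fun r hr => (hd r (interior_subset hr)).differentiableAt.differentiableWithinAt) ?_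
  intro r hr
  rw [interior_Ico] at hr
  rw [(hd r ⟨hr.1.le, hr.2⟩).deriv, neg_nonpos]
  exact mul_nonneg hr.1.le (Real.rpow_pos_of_pos (sub_pos.2 hr.2) _).le

def radialSolution (C p R β r : ℝ) : ℝ := (C * radialProfile R β r) ^ p

def radialWeight (C p R β r : ℝ) : ℝ := C * p * (R - r) ^ β * (C * radialProfile R β r) ^ (p - 1)

variable {C p : ℝ}

lemma hasDerivAt_radialSolution (hC : 0 < C) (hβ : -1 < β) (hr₀ : 0 ≤ r) (hr : r < R) :
    HasDerivAt (radialSolution C p R β) (-(r * radialWeight C p R β r)) r := by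
  have hCg : C * radialProfile R β r ≠ 0 := (mul_pos hC (radialProfile_pos hβ hr₀ hr)).ne'
  refine (((hasDerivAt_radialProfile (by linarith) (by linarith) hr).const_mul C).rpow_const
    (Or.inl hCg)).congr_deriv ?_
  rw [radialWeight]
  ring

lemma radialWeight_pos (hC : 0 < C) (hp : 0 < p) (hβ : -1 < β) (hr₀ : 0 ≤ r) (hr : r < R) :
    0 < radialWeight C p R β r := by
  have := radialProfile_pos hβ hr₀ hr
  have := sub_pos.2 hr
  unfold radialWeight
  positivity

lemma differentiableAt_radialWeight (hC : 0 < C) (hβ : -1 < β) (hr₀ : 0 ≤ r) (hr : r < R) :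
    DifferentiableAt ℝ (radialWeight C p R β) r := by
  have hCg : C * radialProfile R β r ≠ 0 := (mul_pos hC (radialProfile_pos hβ hr₀ hr)).ne'
  have hg : DifferentiableAt ℝ (radialProfile R β) r :=
    (hasDerivAt_radialProfile (by linarith) (by linarith) hr).differentiableAt
  exact (((differentiableAt_id.const_sub R).rpow_const (Or.inl (sub_pos.2 hr).ne')).const_mul
    (C * p)).mul ((hg.const_mul C).rpow_const (Or.inl hCg))

lemma radialWeight_monotoneOn (hC : 0 < C) (hp : 0 ≤ p) (hp₁ : p ≤ 1) (hβ : -1 < β)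
    (hβ₀ : β ≤ 0) : MonotoneOn (radialWeight C p R β) (Ico 0 R) := by
  intro a ha b hb hab
  have hga := mul_pos hC (radialProfile_pos hβ ha.1 ha.2)
  have hgb := mul_pos hC (radialProfile_pos hβ hb.1 hb.2)
  have hRb := sub_pos.2 hb.2
  have h₁ : (R - a) ^ β ≤ (R - b) ^ β := Real.rpow_le_rpow_of_nonpos hRb (by linarith) hβ₀
  have h₂ : (C * radialProfile R β a) ^ (p - 1) ≤ (C * radialProfile R β b) ^ (p - 1) :=
    Real.rpow_le_rpow_of_nonpos hgb
      (mul_le_mul_of_nonneg_left (radialProfile_antitoneOn hβ ha hb hab) hC.le) (by linarith)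
  unfold radialWeight
  gcongr

end

theorem stmt1_general (R c2 γ β : ℝ) (k : ℕ)
    (hc2 : 0 < c2) (hγ : 0 < γ) (hk : 1 ≤ k)
    (hβ1 : -1 < β) (hβ2 : β ≤ 0)
    (u : ℝ → ℝ)
    (hu : ∀ r, u r =
      (c2 * (1 + γ) / k *
        (R / (β + 1) * (R - r) ^ (β + 1) - 1 / (β + 2) * (R - r) ^ (β + 2))) ^ (1 / (1 + γ))) :
    (∀ r ∈ Set.Ico (0 : ℝ) R, deriv u r ≤ 0 ∧ 0 < u r) ∧
      ∀ r ∈ Set.Ioo (0 : ℝ) R, deriv (deriv u) r ≤ deriv u r / r := by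
  set C := c2 * (1 + γ) / k
  set p := 1 / (1 + γ)
  have hC : 0 < C := by positivity
  have hp : 0 < p := by positivity
  have hp₁ : p ≤ 1 := by rw [div_le_one (by positivity)]; linarith
  obtain rfl : u = radialSolution C p R β := funext hu
  refine ⟨fun r hr => ⟨?_, ?_⟩, fun r hr => ?_⟩
  · rw [(hasDerivAt_radialSolution hC hβ1 hr.1 hr.2).deriv, neg_nonpos]
    exact mul_nonneg hr.1 (radialWeight_pos hC hp hβ1 hr.1 hr.2).le
  · exact Real.rpow_pos_of_pos (mul_pos hC (radialProfile_pos hβ1 hr.1 hr.2)) p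
  · refine deriv_deriv_le_deriv_div_of_eventuallyEq_neg_mul hr.1 ?_
      (differentiableAt_radialWeight hC hβ1 hr.1.le hr.2)
      (radialWeight_monotoneOn hC hp.le hp₁ hβ1 hβ2) (Ico_mem_nhds hr.1 hr.2)
    filter_upwards [Ioo_mem_nhds hr.1 hr.2] with t ht
    exact (hasDerivAt_radialSolution hC hβ1 ht.1.le ht.2).deriv

theorem stmt1 (R c2 γ β : ℝ) (k : ℕ)
    (hR : 0 < R) (hc2 : 0 < c2) (hγ : 0 < γ) (hk : 1 ≤ k)
    (hβ1 : -1 < β) (hβ2 : β ≤ 0)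
    (u : ℝ → ℝ)
    (hu : ∀ r, u r =
      (c2 * (1 + γ) / k *
        (R / (β + 1) * (R - r) ^ (β + 1) - 1 / (β + 2) * (R - r) ^ (β + 2))) ^ (1 / (1 + γ))) :
    (∀ r ∈ Set.Ico (0 : ℝ) R, deriv u r ≤ 0 ∧ 0 < u r) ∧
      ∀ r ∈ Set.Ioo (0 : ℝ) R, deriv (deriv u) r ≤ deriv u r / r :=
  stmt1_general R c2 γ β k hc2 hγ hk hβ1 hβ2 u hu
end

section
/- Let γ>0, b>0, k≥1, ε>0 with ε < k/b, and define u_ε(r) = ((1+γ)/b · (r - k/b + ε + (k/b)·log((k-br)/(εb))))^{1/(1+γ)} for r∈[0, k/b - ε]. Then u_ε solves k·u'(r)/r - b·u'(r) + u(r)^{-γ} = 0 on (0, k/b - ε) with u_ε'(0)=0 and u_ε(k/b - ε)=0. -/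
/-!
Write `c = k / b` and `u = ((1 + γ) / b * f) ^ (1 / (1 + γ))` with
`f r = r - c + ε + c log ((c - r) / ε)`. Then `f' r = -r / (c - r)`, so the chain rule gives
`u' = f' / b * u ^ (-γ)`, and `(k / r - b) u' = -u ^ (-γ)` is an algebraic identity. The
bracket `f` vanishes at `c - ε` and is positive on `[0, c - ε)` by the strict inequality
`log x < x - 1` at `x = ε / (c - r)`, which keeps the real power differentiable there.
-/

open Real

noncomputable def logProfile (c ε r : ℝ) : ℝ :=
  r - c + ε + c * log ((c - r) / ε)

theorem logProfile_pos {c ε r : ℝ} (hε : 0 < ε) (hr : 0 ≤ r) (hrc : r < c - ε) :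
    0 < logProfile c ε r := by
  have hcr : 0 < c - r := by linarith
  have hlog : log (ε / (c - r)) < ε / (c - r) - 1 :=
    log_lt_sub_one_of_pos (div_pos hε hcr) (by rw [Ne, div_eq_one_iff_eq hcr.ne']; linarith)
  rw [log_div hε.ne' hcr.ne'] at hlog
  have hq : ε / (c - r) < 1 := (div_lt_one hcr).mpr (by linarith)
  have hcq : c * (ε / (c - r)) = ε + r * (ε / (c - r)) := by field_simp; ring
  rw [logProfile, log_div hcr.ne' hε.ne']
  nlinarith [mul_lt_mul_of_pos_left hlog (by linarith : 0 < c), mul_nonneg hr (sub_nonneg.mpr hq.le)]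

theorem logProfile_sub_self (c ε : ℝ) : logProfile c ε (c - ε) = 0 := by
  rcases eq_or_ne ε 0 with rfl | hε
  · simp [logProfile]
  · simp [logProfile, hε]

theorem hasDerivAt_logProfile {c ε r : ℝ} (hε : ε ≠ 0) (hrc : r ≠ c) :
    HasDerivAt (logProfile c ε) (-r / (c - r)) r := by
  have hcr : c - r ≠ 0 := sub_ne_zero.mpr hrc.symm
  have hlog : HasDerivAt (fun x => log ((c - x) / ε)) (-1 / ε / ((c - r) / ε)) r :=
    (((hasDerivAt_id r).const_sub c).div_const ε).log (div_ne_zero hcr hε)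
  refine ((((hasDerivAt_id r).sub_const c).add_const ε).add (hlog.const_mul c)).congr_deriv ?_
  field_simp
  ring

theorem HasDerivAt.rpow_one_div_one_add {A : ℝ → ℝ} {A' γ x : ℝ} (hA : HasDerivAt A A' x)
    (hpos : 0 < A x) (hγ : 1 + γ ≠ 0) :
    HasDerivAt (fun y => A y ^ (1 / (1 + γ))) (A' / (1 + γ) * (A x ^ (1 / (1 + γ))) ^ (-γ)) x := by
  convert hA.rpow_const (p := 1 / (1 + γ)) (Or.inl hpos.ne') using 1
  rw [← rpow_mul hpos.le]
  field_simp
  ring_nf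

theorem stmt8_general (γ b ε : ℝ) (k : ℕ) (hγ : 0 < γ) (hb : 0 < b)
    (hε : 0 < ε) (hεk : ε < k / b)
    (u : ℝ → ℝ)
    (hu : ∀ r, u r =
      ((1 + γ) / b * (r - k / b + ε + k / b * Real.log ((k - b * r) / (ε * b)))) ^ (1 / (1 + γ))) :
    (∀ r ∈ Set.Ioo (0 : ℝ) (k / b - ε),
        (k : ℝ) * deriv u r / r - b * deriv u r + (u r) ^ (-γ) = 0) ∧
      deriv u 0 = 0 ∧ u (k / b - ε) = 0 := by
  have hγ1 : 1 + γ ≠ 0 := by linarith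
  have hu : u = fun r => ((1 + γ) / b * logProfile (k / b) ε r) ^ (1 / (1 + γ)) := by
    ext r
    rw [hu, logProfile, show ((k : ℝ) - b * r) / (ε * b) = (k / b - r) / ε by field_simp]
  have hderiv : ∀ r, 0 ≤ r → r < k / b - ε →
      deriv u r = (1 + γ) / b * (-r / (k / b - r)) / (1 + γ) * u r ^ (-γ) := fun r hr hrc =>
    hu ▸ (((hasDerivAt_logProfile hε.ne' (by linarith)).const_mul ((1 + γ) / b)).rpow_one_div_one_add
      (mul_pos (by positivity) (logProfile_pos hε hr hrc)) hγ1).deriv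
  refine ⟨fun r ⟨hr, hrc⟩ => ?_, by simpa using hderiv 0 le_rfl (by linarith), ?_⟩
  · have hkr : (k : ℝ) - b * r ≠ 0 := by nlinarith [(lt_div_iff₀ hb).mp (by linarith : r < k / b)]
    rw [hderiv r hr.le hrc]
    field_simp
    ring
  · rw [hu]
    simp [logProfile_sub_self, hγ1]

theorem stmt8 (γ b ε : ℝ) (k : ℕ) (hγ : 0 < γ) (hb : 0 < b) (hk : 1 ≤ k)
    (hε : 0 < ε) (hεk : ε < k / b)
    (u : ℝ → ℝ)
    (hu : ∀ r, u r =
      ((1 + γ) / b * (r - k / b + ε + k / b * Real.log ((k - b * r) / (ε * b)))) ^ (1 / (1 + γ))) :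
    (∀ r ∈ Set.Ioo (0 : ℝ) (k / b - ε),
        (k : ℝ) * deriv u r / r - b * deriv u r + (u r) ^ (-γ) = 0) ∧
      deriv u 0 = 0 ∧ u (k / b - ε) = 0 :=
  stmt8_general γ b ε k hγ hb hε hεk u hu
end
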